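/- For q even, the channel of the quantum cat map satisfies M₊[U_C] = |Φ⁺⟩⟨Φ⁺| + |Ψ⟩⟨Ψ̄|, where |Ψ⟩ = (1/√q)Σ_k |k, (k+q/2) mod q⟩ and |Ψ̄⟩ = (1/√q)Σ_k (-1)^k |kk⟩; since ⟨Ψ̄|Φ⁺⟩ = ⟨Ψ̄|Ψ⟩ = ⟨Φ⁺|Ψ⟩ = 0, it follows that M₊[U_C]ⁿ = |Φ⁺⟩⟨Φ⁺| for all n ≥ 2. -/

import Mathlib

open Matrix

/-- Matrices on the tensor product `ℂ^q ⊗ ℂ^q`, indexed by pairs. -/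
abbrev MQ (q : ℕ) := Matrix (Fin q × Fin q) (Fin q × Fin q) ℂ

/-- Realignment R1 : `⟨βα|A^{R1}|ji⟩ = ⟨iα|A|jβ⟩`. -/
def R1 {q : ℕ} (A : MQ q) : MQ q := fun p r => A (r.2, p.2) (r.1, p.1)

/-- Realignment R2 : `⟨ij|A^{R2}|αβ⟩ = ⟨iα|A|jβ⟩`. -/
def R2 {q : ℕ} (A : MQ q) : MQ q := fun p r => A (p.1, r.1) (p.2, r.2)

/-- The swap operator `S|iα⟩ = |αi⟩`. -/
def Swap (q : ℕ) : MQ q := fun p r => if p.1 = r.2 ∧ p.2 = r.1 then 1 else 0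

/-- Partial transpose on the first factor: `⟨jα|A^{T1}|iβ⟩ = ⟨iα|A|jβ⟩`. -/
def T1 {q : ℕ} (A : MQ q) : MQ q := fun p r => A (r.1, p.2) (p.1, r.2)

/-- Partial transpose on the second factor: `⟨iβ|A^{T2}|jα⟩ = ⟨iα|A|jβ⟩`. -/
def T2 {q : ℕ} (A : MQ q) : MQ q := fun p r => A (p.1, r.2) (r.1, p.2)

/-- The coupled quantum cat map:
`⟨kα|U_C|jβ⟩ = (1/q) exp(-(2πi/q)[kα + 2jβ - kβ - jα])`. -/
noncomputable def catMap (q : ℕ) : MQ q := fun p r =>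
  (q : ℂ)⁻¹ * Complex.exp (-(2 * Real.pi * Complex.I / q) *
    (((p.1.val * p.2.val : ℤ) + 2 * (r.1.val * r.2.val : ℤ)
      - (p.1.val * r.2.val : ℤ) - (p.2.val * r.1.val : ℤ) : ℤ) : ℂ))

/-- The channel superoperator `M₊[U] = (1/q) (U^{T2} U^{T2†})^{R1}`. -/
noncomputable def Mplus {q : ℕ} (U : MQ q) : MQ q :=
  ((q : ℂ))⁻¹ • R1 (T2 U * (T2 U)ᴴ)

/-- The maximally entangled state `|Φ⁺⟩ = (1/√q) Σ_k |kk⟩`. -/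
noncomputable def PhiPlus (q : ℕ) : Fin q × Fin q → ℂ :=
  fun p => if p.1 = p.2 then ((Real.sqrt q : ℝ) : ℂ)⁻¹ else 0

/-- `|Ψ⟩ = (1/√q) Σ_k |k, (k+q/2) mod q⟩`. -/
noncomputable def Psi (q : ℕ) : Fin q × Fin q → ℂ :=
  fun p => if (p.2 : ℕ) = ((p.1 : ℕ) + q / 2) % q then ((Real.sqrt q : ℝ) : ℂ)⁻¹ else 0

/-- `|Ψ̄⟩ = (1/√q) Σ_k (-1)^k |kk⟩`. -/
noncomputable def PsiBar (q : ℕ) : Fin q × Fin q → ℂ :=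
  fun p => if p.1 = p.2 then (-1 : ℂ) ^ (p.1 : ℕ) * ((Real.sqrt q : ℝ) : ℂ)⁻¹ else 0

open Complex Finset

/-!
Write the cat map in powers of `ζ = e^{-2πi/q}`. An entry of `U_C^{T2} U_C^{T2†}` is then a
product of two character sums over `ℤ/q`, so it vanishes unless `i = j` and `q ∣ 2(b - b')`.
For even `q` the latter means `b' = b` or `b' = b ± q/2`, and on the second branch the phase
is `ζ^{∓jq/2} = (-1)^j`: these are the two rank-one terms. Since `|Φ⁺⟩` is a unit vector and
the three inner products vanish, `P = |Φ⁺⟩⟨Φ⁺|` is idempotent and every other product of `P`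
and `Q = |Ψ⟩⟨Ψ̄|` is zero, so `(P + Q)ⁿ = P` for `n ≥ 2`.
-/

theorem IsPrimitiveRoot.sum_zpow_mul {K : Type*} [Field K] {ζ : K} {q : ℕ}
    (hζ : IsPrimitiveRoot ζ q) (n : ℤ) :
    ∑ m : Fin q, ζ ^ ((m : ℤ) * n) = if (q : ℤ) ∣ n then (q : K) else 0 := by
  have hpow (m : ℕ) : ζ ^ ((m : ℤ) * n) = (ζ ^ n) ^ m := by
    rw [mul_comm, _root_.zpow_mul, zpow_natCast]
  simp only [hpow]
  rw [Fin.sum_univ_eq_sum_range (fun m => (ζ ^ n) ^ m)]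
  split_ifs with hdvd
  · simp [(hζ.zpow_eq_one_iff_dvd n).2 hdvd]
  · have hne : ζ ^ n ≠ 1 := mt (hζ.zpow_eq_one_iff_dvd n).1 hdvd
    have hq : (ζ ^ n) ^ q = 1 := by
      rw [← zpow_natCast, ← _root_.zpow_mul, mul_comm, _root_.zpow_mul, zpow_natCast,
        hζ.pow_eq_one, _root_.one_zpow]
    rw [geom_sum_eq hne, hq, sub_self, zero_div]

theorem IsPrimitiveRoot.pow_eq_neg_one_of_two_mul {R : Type*} [CommRing R] [NoZeroDivisors R]
    {ζ : R} {h : ℕ} (hζ : IsPrimitiveRoot ζ (2 * h)) (hh : h ≠ 0) : ζ ^ h = -1 := by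
  have h2 : IsPrimitiveRoot (ζ ^ h) 2 := by
    simpa [Nat.mul_div_cancel _ (Nat.pos_of_ne_zero hh)] using hζ.pow_of_dvd hh (dvd_mul_left h 2)
  exact h2.eq_neg_one_of_two_right

theorem IsIdempotentElem.add_pow_eq_of_mul_eq_zero {R : Type*} [Semiring R] {P Q : R}
    (hP : IsIdempotentElem P) (hPQ : P * Q = 0) (hQP : Q * P = 0) (hQ : Q * Q = 0) {n : ℕ}
    (hn : 2 ≤ n) : (P + Q) ^ n = P := by
  have hPPQ : P * (P + Q) = P := by rw [mul_add, hP.eq, hPQ, add_zero]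
  induction n, hn using Nat.le_induction with
  | base => rw [sq, add_mul, hPPQ, mul_add, hQP, hQ, add_zero, add_zero]
  | succ n _ ih => rw [pow_succ, ih, hPPQ]

theorem Nat.add_half_mod {q k : ℕ} (hk : k < q) :
    (k + q / 2) % q = if q ≤ k + q / 2 then k + q / 2 - q else k + q / 2 := by
  rw [Nat.add_mod_eq_ite, Nat.mod_eq_of_lt hk, Nat.mod_eq_of_lt (by omega)]

theorem Nat.add_half_mod_ne {q k : ℕ} (hq : 2 ≤ q) (hk : k < q) : (k + q / 2) % q ≠ k := by
  rw [Nat.add_half_mod hk]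
  split_ifs <;> omega

theorem Int.natCast_dvd_sub_iff_of_lt {q a k : ℕ} (ha : a < q) (hk : k < q) :
    (q : ℤ) ∣ (a : ℤ) - k ↔ a = k :=
  ⟨fun hd => ((Nat.modEq_iff_dvd.2 hd).eq_of_lt_of_lt hk ha).symm, by rintro rfl; simp⟩

theorem Int.natCast_dvd_two_mul_sub_iff_of_even {q a k : ℕ} (heven : Even q) (ha : a < q)
    (hk : k < q) : (q : ℤ) ∣ 2 * ((a : ℤ) - k) ↔ a = k ∨ a = (k + q / 2) % q := by
  obtain ⟨h, rfl⟩ := heven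
  rw [Nat.add_half_mod hk]
  constructor
  · rintro ⟨t, ht⟩
    -- `|2 (a - k)| < 2q` leaves only `t ∈ {-1, 0, 1}`
    have ht' : -2 < t ∧ t < 2 := by constructor <;> push_cast at ht <;> nlinarith
    obtain ⟨htl, htu⟩ := ht'
    interval_cases t <;> split_ifs <;> push_cast at ht <;> omega
  · rintro (rfl | rfl)
    · simp
    · split_ifs
      · exact ⟨-1, by push_cast; omega⟩
      · exact ⟨1, by push_cast; omega⟩

noncomputable def ζ (q : ℕ) : ℂ := exp (-(2 * Real.pi * I / q))

theorem ζ_zpow (q : ℕ) (t : ℤ) : ζ q ^ t = exp (-(2 * Real.pi * I / q) * t) := by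
  rw [ζ, ← exp_int_mul, mul_comm]

theorem isPrimitiveRoot_ζ {q : ℕ} (hq : q ≠ 0) : IsPrimitiveRoot (ζ q) q := by
  rw [ζ, exp_neg]
  exact (isPrimitiveRoot_exp q hq).inv

theorem star_ζ_zpow (q : ℕ) (t : ℤ) : star (ζ q ^ t) = ζ q ^ (-t) := by
  have : star (ζ q) = (ζ q)⁻¹ := by
    rw [ζ, star_def, ← exp_conj, ← exp_neg]
    congr 1
    simp [map_div₀, map_ofNat, neg_div]
  rw [star_zpow₀, this, _root_.inv_zpow']

theorem ζ_zpow_sub_add_half {q k : ℕ} (hq : q ≠ 0) (heven : Even q) (hk : k < q) :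
    ζ q ^ ((k : ℤ) - ((k + q / 2) % q : ℕ)) = -1 := by
  have hζ := isPrimitiveRoot_ζ hq
  obtain ⟨h, rfl⟩ := heven
  have hh : ζ (h + h) ^ h = -1 := by
    rw [← two_mul] at hζ ⊢
    exact hζ.pow_eq_neg_one_of_two_mul (by omega)
  rw [Nat.add_half_mod hk]
  split_ifs
  · rw [show (k : ℤ) - ((k + (h + h) / 2 - (h + h) : ℕ) : ℤ) = (h : ℕ) by omega, zpow_natCast, hh]
  · rw [show (k : ℤ) - ((k + (h + h) / 2 : ℕ) : ℤ) = -(h : ℕ) by omega, _root_.zpow_neg,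
      zpow_natCast, hh, inv_neg, inv_one]

theorem catMap_apply (q : ℕ) (p r : Fin q × Fin q) :
    catMap q p r = (q : ℂ)⁻¹ * ζ q ^ ((p.1 : ℤ) * p.2 + 2 * ((r.1 : ℤ) * r.2)
      - p.1 * r.2 - p.2 * r.1) := by
  rw [catMap, ζ_zpow]

theorem T2_catMap_mul_conjTranspose_apply {q : ℕ} (hq : q ≠ 0) (i b j b' : Fin q) :
    (T2 (catMap q) * (T2 (catMap q))ᴴ) (i, b) (j, b') =
      if i = j ∧ (q : ℤ) ∣ 2 * ((b : ℤ) - b') then ζ q ^ ((j : ℤ) * b' - i * b) else 0 := by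
  have hζ := isPrimitiveRoot_ζ hq
  have hζ0 : ζ q ≠ 0 := hζ.ne_zero hq
  have hterm (m a : Fin q) :
      T2 (catMap q) (i, b) (m, a) * (T2 (catMap q))ᴴ (m, a) (j, b') =
        (q : ℂ)⁻¹ * (q : ℂ)⁻¹ * (ζ q ^ ((j : ℤ) * b' - i * b) *
          (ζ q ^ ((m : ℤ) * (2 * ((b : ℤ) - b'))) * ζ q ^ ((a : ℤ) * ((i : ℤ) - j)))) := by
    simp only [T2, conjTranspose_apply, catMap_apply, star_mul', star_ζ_zpow, star_inv₀,
      star_natCast]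
    rw [mul_mul_mul_comm, ← zpow_add₀ hζ0, ← zpow_add₀ hζ0, ← zpow_add₀ hζ0]
    ring_nf
  rw [mul_apply, Fintype.sum_prod_type]
  simp only [hterm, ← mul_sum, ← sum_mul, hζ.sum_zpow_mul,
    Int.natCast_dvd_sub_iff_of_lt i.isLt j.isLt, Fin.val_inj]
  by_cases hij : i = j
  · subst hij
    by_cases hd : (q : ℤ) ∣ 2 * ((b : ℤ) - b')
    · simp only [hd, and_self, if_true]
      field_simp
    · simp [hd]
  · simp [hij]

theorem Mplus_catMap_apply {q : ℕ} (hq : q ≠ 0) (k α j β : Fin q) :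
    Mplus (catMap q) (k, α) (j, β) =
      if j = β ∧ (q : ℤ) ∣ 2 * ((α : ℤ) - k) then (q : ℂ)⁻¹ * ζ q ^ ((j : ℤ) * k - α * β)
      else 0 := by
  rw [Mplus, Matrix.smul_apply, smul_eq_mul, R1, T2_catMap_mul_conjTranspose_apply hq]
  by_cases hjβ : j = β
  · subst hjβ
    simp only [true_and, mul_ite, mul_zero, mul_comm (α : ℤ)]
  · simp [hjβ, Ne.symm hjβ]

theorem star_PhiPlus (q : ℕ) : star (PhiPlus q) = PhiPlus q := by
  ext p
  simp [PhiPlus, apply_ite star]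

theorem star_PsiBar (q : ℕ) : star (PsiBar q) = PsiBar q := by
  ext p
  simp [PsiBar, apply_ite star]

theorem inv_sqrt_mul_inv_sqrt (q : ℕ) :
    ((Real.sqrt q : ℝ) : ℂ)⁻¹ * ((Real.sqrt q : ℝ) : ℂ)⁻¹ = (q : ℂ)⁻¹ := by
  rw [← mul_inv, ← ofReal_mul, Real.mul_self_sqrt (Nat.cast_nonneg q), ofReal_natCast]

theorem Psi_apply_self {q : ℕ} (hq : 2 ≤ q) (k : Fin q) : Psi q (k, k) = 0 :=
  if_neg (Nat.add_half_mod_ne hq k.isLt).symm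

theorem dotProduct_PsiBar_PhiPlus {q : ℕ} (heven : Even q) :
    PsiBar q ⬝ᵥ PhiPlus q = 0 := by
  simp only [dotProduct, Fintype.sum_prod_type, PsiBar, PhiPlus, mul_ite, ite_mul, zero_mul,
    mul_zero, sum_ite_eq, mem_univ, if_true, ← sum_mul]
  rw [Fin.sum_univ_eq_sum_range (fun n => (-1 : ℂ) ^ n), neg_one_geom_sum, if_pos heven,
    zero_mul, zero_mul]

theorem dotProduct_PhiPlus_self {q : ℕ} (hq : q ≠ 0) :
    PhiPlus q ⬝ᵥ PhiPlus q = 1 := by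
  simp [dotProduct, Fintype.sum_prod_type, PhiPlus, inv_sqrt_mul_inv_sqrt, hq]

theorem dotProduct_PsiBar_Psi {q : ℕ} (hq : 2 ≤ q) : PsiBar q ⬝ᵥ Psi q = 0 := by
  refine sum_eq_zero fun ⟨a, b⟩ _ => ?_
  by_cases hab : a = b
  · subst hab
    rw [Psi_apply_self hq, mul_zero]
  · simp [PsiBar, hab]

theorem dotProduct_PhiPlus_Psi {q : ℕ} (hq : 2 ≤ q) : PhiPlus q ⬝ᵥ Psi q = 0 := by
  refine sum_eq_zero fun ⟨a, b⟩ _ => ?_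
  by_cases hab : a = b
  · subst hab
    rw [Psi_apply_self hq, mul_zero]
  · simp [PhiPlus, hab]

theorem Mplus_catMap_eq {q : ℕ} (hq : 2 ≤ q) (heven : Even q) :
    Mplus (catMap q) = vecMulVec (PhiPlus q) (PhiPlus q) + vecMulVec (Psi q) (PsiBar q) := by
  ext ⟨k, α⟩ ⟨j, β⟩
  rw [Mplus_catMap_apply (by omega), Matrix.add_apply, vecMulVec_apply, vecMulVec_apply]
  simp only [Int.natCast_dvd_two_mul_sub_iff_of_even heven α.isLt k.isLt, Fin.val_inj]
  by_cases hjβ : j = β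
  · subst hjβ
    rcases eq_or_ne α k with rfl | hαk
    · simp [PhiPlus, Psi_apply_self hq, inv_sqrt_mul_inv_sqrt, mul_comm]
    by_cases hα : (α : ℕ) = (k + q / 2) % q
    · have hphase : ζ q ^ ((j : ℤ) * k - α * j) = (-1) ^ (j : ℕ) := by
        rw [show (j : ℤ) * k - α * j = (k - α) * j by ring, _root_.zpow_mul, zpow_natCast, hα,
          ζ_zpow_sub_add_half (by omega) heven k.isLt]
      rw [if_pos ⟨rfl, Or.inr hα⟩, hphase, ← inv_sqrt_mul_inv_sqrt]
      simp only [PhiPlus, Psi, PsiBar, if_neg hαk.symm, if_pos hα, if_true]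
      ring
    · simp [PhiPlus, Psi, hα, hαk, hαk.symm]
  · simp [PhiPlus, PsiBar, hjβ]

/-- for even `q`, `M₊[U_C] = |Φ⁺⟩⟨Φ⁺| + |Ψ⟩⟨Ψ̄|`; the three
inner products `⟨Ψ̄|Φ⁺⟩`, `⟨Ψ̄|Ψ⟩`, `⟨Φ⁺|Ψ⟩` vanish, and consequently
`M₊[U_C]ⁿ = |Φ⁺⟩⟨Φ⁺|` for all `n ≥ 2`. -/
theorem catMap_channel_even (q : ℕ) (hq : 2 ≤ q) (heven : Even q) :
    Mplus (catMap q) =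
        vecMulVec (PhiPlus q) (star (PhiPlus q)) + vecMulVec (Psi q) (star (PsiBar q)) ∧
    (dotProduct (star (PsiBar q)) (PhiPlus q) = 0 ∧
      dotProduct (star (PsiBar q)) (Psi q) = 0 ∧
      dotProduct (star (PhiPlus q)) (Psi q) = 0) ∧
    ∀ n : ℕ, 2 ≤ n → (Mplus (catMap q)) ^ n = vecMulVec (PhiPlus q) (star (PhiPlus q)) := by
  have h₀ : PhiPlus q ⬝ᵥ PhiPlus q = 1 := dotProduct_PhiPlus_self (by omega)
  have h₁ := dotProduct_PsiBar_PhiPlus heven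
  have h₂ := dotProduct_PsiBar_Psi hq
  have h₃ := dotProduct_PhiPlus_Psi hq
  rw [star_PhiPlus, star_PsiBar, Mplus_catMap_eq hq heven]
  refine ⟨rfl, ⟨h₁, h₂, h₃⟩, fun n hn => ?_⟩
  refine IsIdempotentElem.add_pow_eq_of_mul_eq_zero ?_ ?_ ?_ ?_ hn <;>
    simp only [IsIdempotentElem, vecMulVec_mul_vecMulVec, h₀,
      h₁, h₂, h₃, one_smul, zero_smul, vecMulVec_zero]
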